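/- arXiv:2509.09865 — 9 statements merged into one kernel-verified Lean document; each statement's English description precedes it below -/
import Mathlib

section
/- Let α ∈ ℝ, let σ ∈ ℝ with σ ≠ 0 and σ ≠ 1, let β ∈ (0,1), let K > 0 and C ∈ ℝ, and let q > 0 satisfy |ασq| < 1. Then the function u defined by u(q) = (Kσ/(σ−1))·(1+ασq)^{β−1/σ}·q^{1−β}·[1 + ((β−1/σ)/(1−β))·∑_{n=0}^∞ ((1−1/σ)_n (1)_n/(2−β)_n)·(−ασq)^n/n!] + C is differentiable at q with derivative u′(q) = K·(1+ασq)^{β−1/σ}·q^{−β}. -/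
/-!
Write `z = -ασx` and `F = ₂F₁(1 - 1/σ, 1; 2 - β; ·)`. Because the middle parameter is `1`, the
coefficients `e n = (a)ₙ / (c)ₙ` of `₂F₁(a, 1; c; ·)` obey the first-order recurrence
`(c + n) e (n + 1) = (a + n) e n`, so inside the unit disc `F` solves the first-order equation
`z (1 - z) F' = (1 - c) (F - 1) + a z F`. Differentiating the product defining the utility and
eliminating `F'` with this equation, every term containing `F` cancels and only
`K (1 + ασq)^(β - 1/σ) q^(-β)` is left.
-/

open FormalMultilinearSeries

section PowerSeries

variable {𝕜 : Type*} [NontriviallyNormedField 𝕜] [CompleteSpace 𝕜] {a : ℕ → 𝕜} {z : 𝕜}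

theorem hasSum_deriv_ofScalarsSum (hz : ‖z‖ₑ < (ofScalars 𝕜 a).radius) :
    HasSum (fun n : ℕ ↦ ((n : 𝕜) + 1) * a (n + 1) * z ^ n) (deriv (ofScalarsSum a) z) := by
  set p := ofScalars 𝕜 a
  have hs := p.derivSeries.hasSum (x := z)
    (by simpa using hz.trans_le p.radius_le_radius_derivSeries)
  rw [← p.fderiv_sum hz] at hs
  have h := (ContinuousLinearMap.apply 𝕜 𝕜 (1 : 𝕜)).hasSum hs
  simp only [apply_eq_prod_smul_coeff, Finset.prod_const, Finset.card_univ, Fintype.card_fin,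
    map_smul, ContinuousLinearMap.apply_apply, derivSeries_coeff_one, coeff_ofScalars,
    nsmul_eq_mul, Nat.cast_add, Nat.cast_one, smul_eq_mul, fderiv_eq_smul_deriv, one_mul, p,
    mul_comm (z ^ _)] at h
  exact h

end PowerSeries

section Hypergeometric

variable {𝕂 : Type*} [RCLike 𝕂]

theorem ordinaryHypergeometric_apply_eq_tsum (a b c x : 𝕂) :
    ₂F₁ a b c x = ∑' n : ℕ, ((ascPochhammer 𝕂 n).eval a * (ascPochhammer 𝕂 n).eval b /
      (ascPochhammer 𝕂 n).eval c) * x ^ n / (n.factorial : 𝕂) := by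
  rw [ordinaryHypergeometric, ordinaryHypergeometric_sum_eq]
  exact tsum_congr fun n ↦ by rw [smul_eq_mul]; ring

/-- If a parameter is a nonpositive integer the series terminates (with the junk value
`0⁻¹ = 0` when it is `c`), so the radius is `⊤`; otherwise it is `1`. -/
theorem one_le_ordinaryHypergeometricSeries_radius (𝔸 : Type*) [NormedDivisionRing 𝔸]
    [NormedAlgebra 𝕂 𝔸] (a b c : 𝕂) : 1 ≤ (ordinaryHypergeometricSeries 𝔸 a b c).radius := by
  by_cases h : ∃ k : ℕ, a = -k ∨ b = -k ∨ c = -k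
  · obtain ⟨k, rfl | rfl | rfl⟩ := h <;>
      simp [ordinaryHypergeometric_radius_top_of_neg_nat₁,
        ordinaryHypergeometric_radius_top_of_neg_nat₂,
        ordinaryHypergeometric_radius_top_of_neg_nat₃]
  · push Not at h
    refine (ordinaryHypergeometricSeries_radius_eq_one 𝔸 a b c fun k ↦ ?_).ge
    obtain ⟨ha, hb, hc⟩ := h k
    exact ⟨fun h ↦ ha (by rw [h, neg_neg]), fun h ↦ hb (by rw [h, neg_neg]),
      fun h ↦ hc (by rw [h, neg_neg])⟩

theorem enorm_lt_ordinaryHypergeometricSeries_radius (a b c : 𝕂) {z : 𝕂} (hz : ‖z‖ < 1) :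
    ‖z‖ₑ < (ordinaryHypergeometricSeries 𝕂 a b c).radius :=
  (by simpa [← ofReal_norm] using hz : ‖z‖ₑ < 1).trans_le
    (one_le_ordinaryHypergeometricSeries_radius 𝕂 a b c)

theorem differentiableAt_ordinaryHypergeometric (a b c : 𝕂) {z : 𝕂} (hz : ‖z‖ < 1) :
    DifferentiableAt 𝕂 (₂F₁ a b c) z :=
  ((ordinaryHypergeometricSeries 𝕂 a b c).hasFDerivAt_sum
    (enorm_lt_ordinaryHypergeometricSeries_radius a b c hz)).differentiableAt

variable (a : 𝕂) {c : 𝕂}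

theorem add_mul_ordinaryHypergeometricCoefficient_one_succ (hc : ∀ k : ℕ, (k : 𝕂) ≠ -c)
    (n : ℕ) :
    (c + n) * ordinaryHypergeometricCoefficient a 1 c (n + 1) =
      (a + n) * ordinaryHypergeometricCoefficient a 1 c n := by
  have hcn : c + n ≠ 0 := fun h ↦ hc n (eq_neg_of_add_eq_zero_right h)
  have hpoch : (ascPochhammer 𝕂 n).eval c ≠ 0 := fun h ↦ by
    obtain ⟨k, -, hk⟩ := (ascPochhammer_eval_eq_zero_iff n c).1 h
    exact hc k hk
  simp only [ordinaryHypergeometricCoefficient, ascPochhammer_succ_eval, ascPochhammer_eval_one,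
    Nat.factorial_succ, Nat.cast_mul]
  field_simp
  push_cast
  ring

theorem mul_one_sub_mul_deriv_ordinaryHypergeometric_one (hc : ∀ k : ℕ, (k : 𝕂) ≠ -c)
    {z : 𝕂} (hz : ‖z‖ < 1) :
    z * (1 - z) * deriv (₂F₁ a 1 c) z = (1 - c) * (₂F₁ a 1 c z - 1) + a * z * ₂F₁ a 1 c z := by
  set e := ordinaryHypergeometricCoefficient a (1 : 𝕂) c
  have hr : ‖z‖ₑ < (ofScalars 𝕂 e).radius := enorm_lt_ordinaryHypergeometricSeries_radius a 1 c hz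
  have hS : HasSum (fun n ↦ e n * z ^ n) (₂F₁ a 1 c z) := by
    have h := (ofScalars 𝕂 e).hasSum (x := z) (by simpa using hr)
    simp only [ofScalars_apply_eq, smul_eq_mul] at h
    exact h
  have hD : HasSum (fun n : ℕ ↦ ((n : 𝕂) + 1) * e (n + 1) * z ^ n) (deriv (₂F₁ a 1 c) z) :=
    hasSum_deriv_ofScalarsSum hr
  set F := ₂F₁ a 1 c z
  set D := deriv (₂F₁ a 1 c) z
  have hS' : HasSum (fun n ↦ e (n + 1) * z ^ (n + 1)) (F - 1) := by
    have he0 : e 0 = 1 := by simp [e, ordinaryHypergeometricCoefficient]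
    simpa [he0] using (hasSum_nat_add_iff' 1).2 hS
  have hT : HasSum (fun n : ℕ ↦ n * e n * z ^ n) (z * D) := by
    refine (hasSum_nat_add_iff' 1).1 ?_
    simp only [Finset.sum_range_one, Nat.cast_zero, zero_mul, sub_zero]
    have h := hD.mul_left z
    simp only [← mul_assoc, mul_comm z, pow_succ] at h ⊢
    push_cast
    exact h
  -- both sides are the sum of `(c + n) e (n + 1) z ^ (n + 1)`, split in two ways by the recurrence
  have key : z * D + (c - 1) * (F - 1) = z * (a * F + z * D) := by
    refine ((hD.mul_left z).add (hS'.mul_left (c - 1))).unique ?_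
    convert ((hS.mul_left a).add hT).mul_left z using 1
    funext n
    linear_combination z ^ (n + 1) * add_mul_ordinaryHypergeometricCoefficient_one_succ a hc n
  linear_combination key

end Hypergeometric

theorem lfrra_utility_hasDerivAt_general
    (α σ β K C q : ℝ) (hσ0 : σ ≠ 0) (hσ1 : σ ≠ 1) (hβ : β ∈ Set.Ioo (0:ℝ) 1)
    (hq : 0 < q) (habs : |α * σ * q| < 1) :
    HasDerivAt (fun x : ℝ =>
        (K * σ / (σ - 1)) * (1 + α * σ * x) ^ (β - 1/σ) * x ^ (1 - β) *
          (1 + ((β - 1/σ) / (1 - β)) *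
            ∑' (n : ℕ), ((ascPochhammer ℝ n).eval (1 - 1/σ) * (ascPochhammer ℝ n).eval 1 /
              (ascPochhammer ℝ n).eval (2 - β)) * (-(α * σ * x)) ^ n / (Nat.factorial n : ℝ)) + C)
      (K * (1 + α * σ * q) ^ (β - 1/σ) * q ^ (-β)) q := by
  simp only [← ordinaryHypergeometric_apply_eq_tsum]
  have h1β : 1 - β ≠ 0 := by linarith [hβ.2]
  have hσ1' : σ - 1 ≠ 0 := sub_ne_zero.2 hσ1
  have hc (k : ℕ) : (k : ℝ) ≠ -(2 - β) := by linarith [hβ.2, k.cast_nonneg (α := ℝ)]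
  have hz : ‖-(α * σ * q)‖ < 1 := by rwa [Real.norm_eq_abs, abs_neg]
  have hw : 0 < 1 + α * σ * q := by linarith [(abs_lt.1 habs).1]
  have hlin : HasDerivAt (fun x : ℝ ↦ α * σ * x) (α * σ) q := by
    simpa using (hasDerivAt_id q).const_mul (α * σ)
  have hF := (differentiableAt_ordinaryHypergeometric (1 - 1/σ) 1 (2 - β) hz).hasDerivAt.comp q
    hlin.neg
  have hP := (hlin.const_add 1).rpow_const (p := β - 1/σ) (Or.inl hw.ne')
  have hQ := Real.hasDerivAt_rpow_const (p := 1 - β) (Or.inl hq.ne')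
  have hode := mul_one_sub_mul_deriv_ordinaryHypergeometric_one (1 - 1/σ) hc hz
  refine ((((hP.const_mul _).mul hQ).mul ((hF.const_mul _).const_add 1)).add_const C).congr_deriv ?_
  rw [Real.rpow_sub_one hw.ne', Real.rpow_sub_one hq.ne', show -β = 1 - β - 1 by ring,
    Real.rpow_sub_one hq.ne']
  simp only [Function.comp_apply, Pi.neg_apply, Pi.mul_apply]
  set F := ₂F₁ (1 - 1/σ) 1 (2 - β) (-(α * σ * q))
  set D := deriv (₂F₁ (1 - 1/σ) 1 (2 - β)) (-(α * σ * q))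
  set w := 1 + α * σ * q
  set P := w ^ (β - 1/σ)
  set Q := q ^ (1 - β)
  field_simp at hode ⊢
  linear_combination K * P * Q * (σ * β - 1) * hode

/-- The LFRRA utility in hypergeometric-series form has marginal
utility `K·(1+ασq)^(β−1/σ)·q^(−β)` at any `q > 0` with `|ασq| < 1`. -/
theorem lfrra_utility_hasDerivAt
    (α σ β K C q : ℝ) (hσ0 : σ ≠ 0) (hσ1 : σ ≠ 1) (hβ : β ∈ Set.Ioo (0:ℝ) 1)
    (hK : 0 < K) (hq : 0 < q) (habs : |α * σ * q| < 1) :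
    HasDerivAt (fun x : ℝ =>
        (K * σ / (σ - 1)) * (1 + α * σ * x) ^ (β - 1/σ) * x ^ (1 - β) *
          (1 + ((β - 1/σ) / (1 - β)) *
            ∑' (n : ℕ), ((ascPochhammer ℝ n).eval (1 - 1/σ) * (ascPochhammer ℝ n).eval 1 /
              (ascPochhammer ℝ n).eval (2 - β)) * (-(α * σ * x)) ^ n / (Nat.factorial n : ℝ)) + C)
      (K * (1 + α * σ * q) ^ (β - 1/σ) * q ^ (-β)) q :=
  lfrra_utility_hasDerivAt_general α σ β K C q hσ0 hσ1 hβ hq habs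
end

section
/- Let α ∈ ℝ, β ∈ ℝ, σ ∈ ℝ with σ ≠ 0, and let I ⊆ (0,∞) be a nonempty open interval such that 1 + ασq > 0 for all q ∈ I. Suppose v : ℝ → ℝ is differentiable on I, v(q) > 0 for all q ∈ I, and (ασq+1)·q·v′(q) + (αq+β)·v(q) = 0 for all q ∈ I. Then there exists K > 0 such that v(q) = K·(1+ασq)^{β−1/σ}·q^{−β} for all q ∈ I. (This is the 'only if' direction of the characterization of LFRRA marginal utilities.) -/
/-!
By partial fractions (this is where `σ ≠ 0` enters),
`(αq + β) / ((1 + ασq) q) = β/q - (β - 1/σ) · ασ / (1 + ασq)`, so dividing the ODE by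
`(1 + ασq) q v` says that `log v(q) - (β - 1/σ) log(1 + ασq) + β log q` has derivative zero.
On the interval `I` it is therefore a constant `log K`, and exponentiating gives the formula.
-/

open Real Set

theorem Convex.eq_of_forall_hasDerivAt_zero {E : Type*} [NormedAddCommGroup E] [NormedSpace ℝ E]
    {f : ℝ → E} {s : Set ℝ} (hs : Convex ℝ s) (hf : ∀ x ∈ s, HasDerivAt f 0 x)
    {x y : ℝ} (hx : x ∈ s) (hy : y ∈ s) : f y = f x := by
  have h := hs.norm_image_sub_le_of_norm_hasDerivWithin_le
    (fun z hz => (hf z hz).hasDerivWithinAt) (fun _ _ => norm_zero.le) hx hy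
  rwa [zero_mul, norm_le_zero_iff, sub_eq_zero] at h

namespace LFRRA

variable (α β σ : ℝ) (v : ℝ → ℝ)

/-- The logarithm of `v(q) / ((1 + ασq)^(β - 1/σ) q^(-β))`. -/
noncomputable def logRatio (q : ℝ) : ℝ :=
  log (v q) - (β - 1 / σ) * log (1 + α * σ * q) + β * log q

variable {α β σ v}

theorem hasDerivAt_logRatio {v' q : ℝ} (hv : HasDerivAt v v' q) (hvq : v q ≠ 0)
    (hbase : 1 + α * σ * q ≠ 0) (hq : q ≠ 0) :
    HasDerivAt (logRatio α β σ v)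
      (v' / v q - (β - 1 / σ) * (α * σ / (1 + α * σ * q)) + β * q⁻¹) q := by
  have hlin : HasDerivAt (fun q : ℝ => 1 + α * σ * q) (α * σ) q := by
    simpa using ((hasDerivAt_id q).const_mul (α * σ)).const_add 1
  exact ((hv.log hvq).sub ((hlin.log hbase).const_mul _)).add ((hasDerivAt_log hq).const_mul β)

theorem logDeriv_eq_zero_of_ode (hσ : σ ≠ 0) {v' q : ℝ} (hvq : v q ≠ 0)
    (hbase : 1 + α * σ * q ≠ 0) (hq : q ≠ 0)
    (hode : (α * σ * q + 1) * q * v' + (α * q + β) * v q = 0) :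
    v' / v q - (β - 1 / σ) * (α * σ / (1 + α * σ * q)) + β * q⁻¹ = 0 := by
  rw [mul_comm α σ] at hbase ⊢ -- the form `field_simp` looks for
  field_simp
  linear_combination hode

theorem eq_exp_logRatio_mul {q : ℝ} (hvq : 0 < v q) (hbase : 0 < 1 + α * σ * q) (hq : 0 < q) :
    v q = exp (logRatio α β σ v q) * (1 + α * σ * q) ^ (β - 1 / σ) * q ^ (-β) := by
  rw [rpow_def_of_pos hbase, rpow_def_of_pos hq, ← exp_add, ← exp_add, logRatio]
  convert (exp_log hvq).symm using 2
  ring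

end LFRRA

open LFRRA in
theorem lfrra_ode_solution_unique_general
    (α β σ : ℝ) (hσ : σ ≠ 0)
    (I : Set ℝ) (hIne : I.Nonempty) (hIconn : I.OrdConnected)
    (hIsub : I ⊆ Set.Ioi (0:ℝ))
    (hbase : ∀ q ∈ I, 0 < 1 + α * σ * q)
    (v v' : ℝ → ℝ)
    (hderiv : ∀ q ∈ I, HasDerivAt v (v' q) q)
    (hvpos : ∀ q ∈ I, 0 < v q)
    (hode : ∀ q ∈ I, (α * σ * q + 1) * q * v' q + (α * q + β) * v q = 0) :
    ∃ K : ℝ, 0 < K ∧ ∀ q ∈ I, v q = K * (1 + α * σ * q) ^ (β - 1/σ) * q ^ (-β) := by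
  have hlogRatio : ∀ q ∈ I, HasDerivAt (logRatio α β σ v) 0 q := fun q hq => by
    have hvq := (hvpos q hq).ne'
    have hbq := (hbase q hq).ne'
    have hq0 := (mem_Ioi.mp (hIsub hq)).ne'
    have h := hasDerivAt_logRatio (β := β) (hderiv q hq) hvq hbq hq0
    rwa [logDeriv_eq_zero_of_ode hσ hvq hbq hq0 (hode q hq)] at h
  obtain ⟨q₀, hq₀⟩ := hIne
  refine ⟨exp (logRatio α β σ v q₀), exp_pos _, fun q hq => ?_⟩
  rw [← hIconn.convex.eq_of_forall_hasDerivAt_zero hlogRatio hq₀ hq]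
  exact eq_exp_logRatio_mul (hvpos q hq) (hbase q hq) (hIsub hq)

/-- ('only if' direction) A positive solution of the LFRRA
first-order ODE on an open interval `I ⊆ (0,∞)` must be of the form
`v(q) = K·(1+ασq)^(β−1/σ)·q^(−β)` for some `K > 0`. -/
theorem lfrra_ode_solution_unique
    (α β σ : ℝ) (hσ : σ ≠ 0)
    (I : Set ℝ) (hIopen : IsOpen I) (hIne : I.Nonempty) (hIconn : I.OrdConnected)
    (hIsub : I ⊆ Set.Ioi (0:ℝ))
    (hbase : ∀ q ∈ I, 0 < 1 + α * σ * q)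
    (v v' : ℝ → ℝ)
    (hderiv : ∀ q ∈ I, HasDerivAt v (v' q) q)
    (hvpos : ∀ q ∈ I, 0 < v q)
    (hode : ∀ q ∈ I, (α * σ * q + 1) * q * v' q + (α * q + β) * v q = 0) :
    ∃ K : ℝ, 0 < K ∧ ∀ q ∈ I, v q = K * (1 + α * σ * q) ^ (β - 1/σ) * q ^ (-β) :=
  lfrra_ode_solution_unique_general α β σ hσ I hIne hIconn hIsub hbase v v' hderiv hvpos hode
end

section
/- Let α ∈ ℝ, let σ ∈ ℝ with σ ≠ 0 and σ ≠ 1, let β ∈ (0,1), let K > 0 and C ∈ ℝ, and let q > 0 satisfy 1 + ασq > 0. Then the function u defined by u(q) = (Kσ/(σ−1))·(1+ασq)^{β−1/σ}·q^{1−β}·[1 + (β−1/σ)·∫₀¹ (1−t)^{−β}·(1+tασq)^{1/σ−1} dt] + C is differentiable at q with derivative u′(q) = K·(1+ασq)^{β−1/σ}·q^{−β}. -/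
/-!
Write `J_c(a) = ∫₀¹ (1 - t)^(-β) (1 + t a)^c dt`. Differentiating under the integral sign (the
`a`-derivative of the integrand is dominated by `(1 - t)^(-β)` times a bound of a continuous
function on a compact set) and using `t a = (1 + t a) - 1` gives `a J_c'(a) = c (J_c - J_{c-1})`.
Integrating `d/dt [(1 - t)^(1-β) (1 + t a)^c]` over `[0, 1]` gives the contiguous relation
`(1 - β + c) J_c - c (1 + a) J_{c-1} = 1`. With `c = 1/σ - 1` and `a = ασq`, this relation
eliminates `J_{c-1}` from the product-rule derivative of the utility, and everything except
`K (1 + ασq)^(β - 1/σ) q^(-β)` cancels.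
-/

open Real MeasureTheory intervalIntegral Set Metric

/-- Euler's integral for `B(1, 1 - β) · ₂F₁(-c, 1; 2 - β; -a)`. -/
noncomputable def eulerIntegral (β c a : ℝ) : ℝ :=
  ∫ t in (0:ℝ)..1, (1 - t) ^ (-β) * (1 + t * a) ^ c

lemma one_add_mul_pos_of_mem_Icc {a t : ℝ} (ha : 0 < 1 + a) (ht : t ∈ Icc (0:ℝ) 1) :
    0 < 1 + t * a := by
  rcases le_or_gt 0 a with h | h
  · nlinarith [mul_nonneg ht.1 h]
  · nlinarith [mul_nonpos_of_nonneg_of_nonpos (sub_nonneg.2 ht.2) h.le]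

lemma intervalIntegrable_one_sub_rpow_neg {β : ℝ} (hβ : β < 1) :
    IntervalIntegrable (fun t : ℝ => (1 - t) ^ (-β)) volume 0 1 := by
  simpa using ((intervalIntegrable_rpow' (a := 0) (b := 1) (r := -β) (by linarith)).comp_sub_left
    1).symm

lemma intervalIntegrable_eulerIntegrand {β a : ℝ} (hβ : β < 1) (ha : 0 < 1 + a) (c : ℝ) :
    IntervalIntegrable (fun t : ℝ => (1 - t) ^ (-β) * (1 + t * a) ^ c) volume 0 1 := by
  refine (intervalIntegrable_one_sub_rpow_neg hβ).mul_continuousOn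
    (ContinuousOn.rpow_const (by fun_prop) fun t ht => Or.inl ?_)
  rw [uIcc_of_le zero_le_one] at ht
  exact (one_add_mul_pos_of_mem_Icc ha ht).ne'

lemma hasDerivAt_one_sub_rpow_mul_rpow {β a c t : ℝ} (ht : t < 1) (hpos : 0 < 1 + t * a) :
    HasDerivAt (fun t : ℝ => (1 - t) ^ (1 - β) * (1 + t * a) ^ c)
      (-(1 - β + c) * ((1 - t) ^ (-β) * (1 + t * a) ^ c)
        + c * (1 + a) * ((1 - t) ^ (-β) * (1 + t * a) ^ (c - 1))) t := by
  have h1t : (1 - t) ≠ 0 := by linarith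
  have hleft : HasDerivAt (fun t : ℝ => (1 - t) ^ (1 - β))
      (-1 * (1 - β) * (1 - t) ^ (1 - β - 1)) t :=
    ((hasDerivAt_id t).const_sub 1).rpow_const (Or.inl h1t)
  have hright : HasDerivAt (fun t : ℝ => (1 + t * a) ^ c) (1 * a * c * (1 + t * a) ^ (c - 1)) t :=
    (((hasDerivAt_id t).mul_const a).const_add 1).rpow_const (Or.inl hpos.ne')
  refine (hleft.mul hright).congr_deriv ?_
  have hsplit_left : (1 - t) ^ (1 - β) = (1 - t) ^ (-β) * (1 - t) := by
    rw [← rpow_add_one h1t]; ring_nf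
  have hsplit_right : (1 + t * a) ^ c = (1 + t * a) ^ (c - 1) * (1 + t * a) := by
    rw [← rpow_add_one hpos.ne']; ring_nf
  rw [show (1:ℝ) - β - 1 = -β by ring, hsplit_left, hsplit_right]
  ring

theorem eulerIntegral_recurrence {β a : ℝ} (hβ : β < 1) (ha : 0 < 1 + a) (c : ℝ) :
    (1 - β + c) * eulerIntegral β c a - c * (1 + a) * eulerIntegral β (c - 1) a = 1 := by
  have hint := intervalIntegrable_eulerIntegrand hβ ha
  have hcont : ContinuousOn (fun t : ℝ => (1 - t) ^ (1 - β) * (1 + t * a) ^ c) (Icc 0 1) :=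
    (ContinuousOn.rpow_const (by fun_prop) fun _ _ => Or.inr (by linarith)).mul
      (ContinuousOn.rpow_const (by fun_prop) fun t ht =>
        Or.inl (one_add_mul_pos_of_mem_Icc ha ht).ne')
  have hftc := integral_eq_sub_of_hasDerivAt_of_le zero_le_one hcont
    (fun t ht => hasDerivAt_one_sub_rpow_mul_rpow ht.2
      (one_add_mul_pos_of_mem_Icc ha (Ioo_subset_Icc_self ht)))
    (((hint c).const_mul _).add ((hint (c - 1)).const_mul _))
  rw [integral_add ((hint c).const_mul _) ((hint (c - 1)).const_mul _),
    intervalIntegral.integral_const_mul, intervalIntegral.integral_const_mul] at hftc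
  simp only [sub_self, zero_rpow (by linarith : (1:ℝ) - β ≠ 0), zero_mul, sub_zero, one_rpow,
    zero_mul, add_zero, one_mul] at hftc
  unfold eulerIntegral
  linarith

theorem hasDerivAt_eulerIntegral {β a : ℝ} (hβ : β < 1) (ha : 0 < 1 + a) (c : ℝ) :
    HasDerivAt (eulerIntegral β c)
      (∫ t in (0:ℝ)..1, (1 - t) ^ (-β) * (t * c * (1 + t * a) ^ (c - 1))) a := by
  set ε := (1 + a) / 2 with hε
  have hpos : ∀ x ∈ closedBall a ε, ∀ t ∈ Icc (0:ℝ) 1, 0 < 1 + t * x := by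
    intro x hx t ht
    have := (abs_le.1 (mem_closedBall.1 hx)).1
    exact one_add_mul_pos_of_mem_Icc (by linarith) ht
  obtain ⟨B, hB⟩ : ∃ B, ∀ p ∈ Icc (0:ℝ) 1 ×ˢ closedBall a ε,
      ‖p.1 * c * (1 + p.1 * p.2) ^ (c - 1)‖ ≤ B :=
    (isCompact_Icc.prod (isCompact_closedBall a ε)).exists_bound_of_continuousOn <|
      (by fun_prop : Continuous fun p : ℝ × ℝ => p.1 * c).continuousOn.mul <|
        ContinuousOn.rpow_const (by fun_prop) fun p hp => Or.inl (hpos _ hp.2 _ hp.1).ne'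
  have hmem : ∀ t ∈ uIoc (0:ℝ) 1, t ∈ Icc (0:ℝ) 1 := fun t ht => by
    rw [uIoc_of_le zero_le_one] at ht
    exact Ioc_subset_Icc_self ht
  refine (hasDerivAt_integral_of_dominated_loc_of_deriv_le
    (F := fun x t => (1 - t) ^ (-β) * (1 + t * x) ^ c)
    (F' := fun x t => (1 - t) ^ (-β) * (t * c * (1 + t * x) ^ (c - 1)))
    (bound := fun t => (1 - t) ^ (-β) * B)
    (closedBall_mem_nhds a (by linarith))
    (Filter.Eventually.of_forall fun x => by fun_prop) (intervalIntegrable_eulerIntegrand hβ ha c)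
    (by fun_prop) (Filter.Eventually.of_forall fun t ht x hx => ?_)
    ((intervalIntegrable_one_sub_rpow_neg hβ).mul_const B)
    (Filter.Eventually.of_forall fun t ht x hx => ?_)).2
  · rw [norm_mul, norm_of_nonneg (rpow_nonneg (by linarith [(hmem t ht).2]) _)]
    exact mul_le_mul_of_nonneg_left (hB (t, x) ⟨hmem t ht, hx⟩)
      (rpow_nonneg (by linarith [(hmem t ht).2]) _)
  · have hlin : HasDerivAt (fun x => 1 + t * x) t x := by
      simpa using ((hasDerivAt_id x).const_mul t).const_add 1
    exact (hlin.rpow_const (Or.inl (hpos x hx t (hmem t ht)).ne')).const_mul _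

lemma mul_sub_eulerIntegral_sub_one {β a : ℝ} (hβ : β < 1) (ha : 0 < 1 + a) (c : ℝ) :
    c * (eulerIntegral β c a - eulerIntegral β (c - 1) a) =
      a * ∫ t in (0:ℝ)..1, (1 - t) ^ (-β) * (t * c * (1 + t * a) ^ (c - 1)) := by
  have hint := intervalIntegrable_eulerIntegrand hβ ha
  rw [← intervalIntegral.integral_const_mul, eulerIntegral, eulerIntegral,
    ← integral_sub (hint c) (hint (c - 1)), ← intervalIntegral.integral_const_mul]
  refine integral_congr fun t ht => ?_
  rw [uIcc_of_le zero_le_one] at ht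
  have hpos := one_add_mul_pos_of_mem_Icc ha ht
  rw [show c = c - 1 + 1 by ring, rpow_add_one hpos.ne', show c - 1 + 1 - 1 = c - 1 by ring]
  ring

theorem lfrra_utility_integral_hasDerivAt_general
    (α σ β K C q : ℝ) (hσ0 : σ ≠ 0) (hσ1 : σ ≠ 1) (hβ : β ∈ Set.Ioo (0:ℝ) 1)
    (hq : 0 < q) (hpos : 0 < 1 + α * σ * q) :
    HasDerivAt (fun x : ℝ =>
        (K * σ / (σ - 1)) * (1 + α * σ * x) ^ (β - 1/σ) * x ^ (1 - β) *
          (1 + (β - 1/σ) *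
            ∫ t in (0:ℝ)..1, (1 - t) ^ (-β) * (1 + t * (α * σ * x)) ^ (1/σ - 1)) + C)
      (K * (1 + α * σ * q) ^ (β - 1/σ) * q ^ (-β)) q := by
  have hlin : HasDerivAt (fun x => α * σ * x) (α * σ) q := by
    simpa using (hasDerivAt_id q).const_mul (α * σ)
  have hbase := (hlin.const_add 1).rpow_const (p := β - 1/σ) (Or.inl hpos.ne')
  have hpow := hasDerivAt_rpow_const (p := 1 - β) (Or.inl hq.ne')
  have hJ := (hasDerivAt_eulerIntegral hβ.2 hpos (1/σ - 1)).comp q hlin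
  refine ((((hbase.const_mul (K * σ / (σ - 1))).mul hpow).mul
    ((hJ.const_mul (β - 1/σ)).const_add 1)).add_const C).congr_deriv ?_
  have hrec := eulerIntegral_recurrence hβ.2 hpos (1/σ - 1)
  have hdiff := mul_sub_eulerIntegral_sub_one hβ.2 hpos (1/σ - 1)
  have hsplit_base : (1 + α * σ * q) ^ (β - 1/σ) =
      (1 + α * σ * q) ^ (β - 1/σ - 1) * (1 + α * σ * q) := by
    rw [← rpow_add_one hpos.ne']; ring_nf
  have hsplit_pow : q ^ (1 - β) = q ^ (-β) * q := by
    rw [← rpow_add_one hq.ne']; ring_nf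
  have hscale : K * σ / (σ - 1) * (1 - 1/σ) = K := by
    field_simp [hσ0, sub_ne_zero.2 hσ1]
  simp only [Pi.mul_apply, Function.comp_apply]
  rw [hsplit_base, hsplit_pow, show 1 - β - 1 = -β by ring]
  linear_combination
    (K * σ / (σ - 1) * (1 + α * σ * q) ^ (β - 1/σ - 1) * q ^ (-β) * (β - 1/σ)) *
      (hrec - (1 + α * σ * q) * hdiff) +
    ((1 + α * σ * q) ^ (β - 1/σ - 1) * (1 + α * σ * q) * q ^ (-β)) * hscale

/-- The integral (analytically continued) representation of the
LFRRA utility has marginal utility `K·(1+ασq)^(β−1/σ)·q^(−β)` at any `q > 0`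
with `1 + ασq > 0`. -/
theorem lfrra_utility_integral_hasDerivAt
    (α σ β K C q : ℝ) (hσ0 : σ ≠ 0) (hσ1 : σ ≠ 1) (hβ : β ∈ Set.Ioo (0:ℝ) 1)
    (hK : 0 < K) (hq : 0 < q) (hpos : 0 < 1 + α * σ * q) :
    HasDerivAt (fun x : ℝ =>
        (K * σ / (σ - 1)) * (1 + α * σ * x) ^ (β - 1/σ) * x ^ (1 - β) *
          (1 + (β - 1/σ) *
            ∫ t in (0:ℝ)..1, (1 - t) ^ (-β) * (1 + t * (α * σ * x)) ^ (1/σ - 1)) + C)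
      (K * (1 + α * σ * q) ^ (β - 1/σ) * q ^ (-β)) q :=
  lfrra_utility_integral_hasDerivAt_general α σ β K C q hσ0 hσ1 hβ hq hpos
end

section
/- Let α ∈ ℝ with α ≠ 0, let σ ∈ ℝ with σ ≠ 0 and σ ≠ 1, let K, C ∈ ℝ, and let q > 0 satisfy |ασq| < 1. For β ∈ (0,1) define U(β) = (Kσ/(σ−1))·(1+ασq)^{β−1/σ}·q^{1−β}·[1 + ((β−1/σ)/(1−β))·∑_{n=0}^∞ ((1−1/σ)_n (1)_n/(2−β)_n)·(−ασq)^n/n!] + C. Then U(β) tends to (K/(α(σ−1)))·[(1+ασq)^{(σ−1)/σ} − 1] + C as β tends to 0 from above. (The limiting expression is the HARA utility.) -/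
/-!
At `β = 0` the series is `₂F₁(1 - 1/σ, 1; 2; -x)` with `x = ασq`, and comparing coefficients with
the binomial series of `(1 + x)^(1/σ)` gives `(x/σ) · ₂F₁(1 - 1/σ, 1; 2; -x) = (1 + x)^(1/σ) - 1`;
substituting this into the utility at `β = 0` yields the HARA utility. It remains to see that the
utility is continuous at `β = 0`: all factors but the series are elementary, and
`c ↦ ₂F₁(a, b; c; z)` is continuous on `c ≥ c₀ > 0` by dominated convergence, since
`(c₀)_n ≤ (c)_n` there and the series with parameters `|a| + 1, |b| + 1, c₀` converges absolutely
for `|z| < 1`.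
-/

open Filter Set Topology Nat

theorem abs_ascPochhammer_eval_le {a b : ℝ} (h : |a| ≤ b) (n : ℕ) :
    |(ascPochhammer ℝ n).eval a| ≤ (ascPochhammer ℝ n).eval b := by
  induction n with
  | zero => simp
  | succ n ih =>
    rw [ascPochhammer_succ_eval, ascPochhammer_succ_eval, abs_mul]
    have hshift : |a + n| ≤ b + n := (abs_add_le a n).trans (by simpa using h)
    exact mul_le_mul ih hshift (abs_nonneg _) ((abs_nonneg _).trans ih)

theorem ascPochhammer_eval_two (S : Type*) [Semiring S] (n : ℕ) :
    (ascPochhammer S n).eval (2 : S) = ((n + 1)! : S) := by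
  have h := factorial_mul_ascPochhammer S 1 n
  rw [factorial_one, Nat.cast_one, one_mul, one_add_one_eq_two] at h
  rw [h, add_comm]

theorem Ring.choose_succ_eq_mul_ascPochhammer_one_sub {K : Type*} [Field K] [CharZero K]
    (c : K) (n : ℕ) :
    Ring.choose c (n + 1) = c * (-1) ^ n * (ascPochhammer K n).eval (1 - c) / ((n + 1)! : K) := by
  have hneg : (ascPochhammer K n).eval (c - n) = (-1) ^ n * (ascPochhammer K n).eval (1 - c) := by
    rw [← neg_sub, ascPochhammer_eval_neg_eq_descPochhammer, descPochhammer_eval_eq_ascPochhammer]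
    ring_nf
  rw [Ring.choose_eq_smul, Polynomial.descPochhammer_smeval_eq_ascPochhammer,
    Polynomial.ascPochhammer_smeval_eq_eval, ascPochhammer_succ_eval, smul_eq_mul]
  push_cast
  rw [show c - (n + 1) + 1 = c - n by ring, hneg]
  ring

theorem ordinaryHypergeometric_eq_tsum_div (a b c z : ℝ) :
    ₂F₁ a b c z = ∑' n : ℕ, ((ascPochhammer ℝ n).eval a * (ascPochhammer ℝ n).eval b /
      (ascPochhammer ℝ n).eval c) * z ^ n / (n ! : ℝ) := by
  rw [ordinaryHypergeometric_eq_tsum]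
  refine tsum_congr fun n => ?_
  rw [smul_eq_mul]
  ring

theorem norm_ordinaryHypergeometricSeries_apply_le (a b : ℝ) {c₀ c : ℝ} (hc₀ : 0 < c₀)
    (hc : c₀ ≤ c) (z : ℝ) (n : ℕ) :
    ‖ordinaryHypergeometricSeries ℝ a b c n fun _ => z‖ ≤
      ‖ordinaryHypergeometricSeries ℝ (|a| + 1) (|b| + 1) c₀ n fun _ => z‖ := by
  have hle : ∀ d : ℝ, |(ascPochhammer ℝ n).eval d| ≤ |(ascPochhammer ℝ n).eval (|d| + 1)| :=
    fun d => (abs_ascPochhammer_eval_le (le_add_of_nonneg_right zero_le_one) n).trans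
      (le_abs_self _)
  have hc₀c : |(ascPochhammer ℝ n).eval c₀| ≤ |(ascPochhammer ℝ n).eval c| :=
    (abs_ascPochhammer_eval_le (by rwa [abs_of_pos hc₀]) n).trans (le_abs_self _)
  rw [ordinaryHypergeometricSeries_apply_eq, ordinaryHypergeometricSeries_apply_eq, norm_smul,
    norm_smul]
  simp only [Real.norm_eq_abs, abs_mul, abs_inv]
  gcongr _ * ?_ * ?_ * ?_⁻¹ * _
  · exact hle a
  · exact hle b
  · exact abs_pos.2 (ascPochhammer_pos n c₀ hc₀).ne'

theorem continuousOn_ordinaryHypergeometric_param (a b : ℝ) {c₀ : ℝ} (hc₀ : 0 < c₀) {z : ℝ}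
    (hz : |z| < 1) : ContinuousOn (fun c => ₂F₁ a b c z) (Ici c₀) := by
  have hnot_neg_nat : ∀ {d : ℝ}, 0 < d → ∀ k : ℕ, (k : ℝ) ≠ -d :=
    fun hd k => ((neg_neg_of_pos hd).trans_le k.cast_nonneg).ne'
  have hradius := ordinaryHypergeometricSeries_radius_eq_one ℝ (|a| + 1) (|b| + 1) c₀
    fun k => ⟨hnot_neg_nat (by positivity) k, hnot_neg_nat (by positivity) k, hnot_neg_nat hc₀ k⟩
  have hsum := (ordinaryHypergeometricSeries ℝ (|a| + 1) (|b| + 1) c₀).summable_norm_apply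
    (x := z) (by rw [hradius]; simpa [edist_dist] using hz)
  simp only [ordinaryHypergeometric, FormalMultilinearSeries.sum]
  refine continuousOn_tsum (fun n => ?_) hsum
    fun n c hc => norm_ordinaryHypergeometricSeries_apply_le a b hc₀ hc z n
  have hne : ∀ c ∈ Ici c₀, (ascPochhammer ℝ n).eval c ≠ 0 :=
    fun c hc => (ascPochhammer_pos n c (hc₀.trans_le hc)).ne'
  simp only [ordinaryHypergeometricSeries_apply_eq]
  fun_prop (disch := assumption)

theorem mul_ordinaryHypergeometric_one_sub_one_two (c : ℝ) {x : ℝ} (hx : |x| < 1) :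
    c * x * ₂F₁ (1 - c) 1 2 (-x) = (1 + x) ^ c - 1 := by
  have hbinomial : HasSum (fun n => Ring.choose c n * x ^ n) ((1 + x) ^ c) := by
    have := Real.one_add_rpow_hasFPowerSeriesOnBall_zero (a := c) |>.hasSum
      (y := x) (by simpa [edist_dist] using hx)
    simpa [binomialSeries, FormalMultilinearSeries.ofScalars_apply_eq, mul_comm] using this
  have hshift := (hasSum_nat_add_iff' 1).2 hbinomial
  simp only [Finset.range_one, Finset.sum_singleton, Ring.choose_zero_right, pow_zero,
    mul_one] at hshift
  rw [ordinaryHypergeometric_eq_tsum, ← tsum_mul_left, ← hshift.tsum_eq]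
  refine tsum_congr fun n => ?_
  rw [Ring.choose_succ_eq_mul_ascPochhammer_one_sub, smul_eq_mul, ascPochhammer_eval_one,
    ascPochhammer_eval_two]
  field_simp
  ring

noncomputable def lfrraUtility (α σ K C q β : ℝ) : ℝ :=
  K * σ / (σ - 1) * (1 + α * σ * q) ^ (β - 1 / σ) * q ^ (1 - β) *
    (1 + (β - 1 / σ) / (1 - β) * ₂F₁ (1 - 1 / σ) 1 (2 - β) (-(α * σ * q))) + C

theorem continuousWithinAt_lfrraUtility_zero (α σ K C q : ℝ) (habs : |α * σ * q| < 1) :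
    ContinuousWithinAt (lfrraUtility α σ K C q) (Ioo 0 1) 0 := by
  have h1x : 1 + α * σ * q ≠ 0 := by linarith [neg_abs_le (α * σ * q)]
  have hbase : ContinuousWithinAt (fun β : ℝ => (1 + α * σ * q) ^ (β - 1 / σ)) (Ioo 0 1) 0 :=
    (Real.continuousAt_const_rpow h1x).comp_continuousWithinAt (by fun_prop)
  have hq : ContinuousWithinAt (fun β : ℝ => q ^ (1 - β)) (Ioo 0 1) 0 :=
    (Real.continuousAt_const_rpow' (by norm_num)).comp_continuousWithinAt (by fun_prop)
  have hratio : ContinuousWithinAt (fun β : ℝ => (β - 1 / σ) / (1 - β)) (Ioo 0 1) 0 :=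
    ContinuousAt.continuousWithinAt (by fun_prop (disch := norm_num))
  have hF : ContinuousWithinAt (fun β => ₂F₁ (1 - 1 / σ) 1 (2 - β) (-(α * σ * q))) (Ioo 0 1) 0 := by
    refine ((continuousOn_ordinaryHypergeometric_param _ 1 one_pos (by rwa [abs_neg])) (2 - 0)
      (by norm_num)).comp (f := fun β : ℝ => 2 - β) (by fun_prop) fun β hβ => ?_
    simp only [mem_Ici]
    linarith [hβ.2]
  exact (((continuousWithinAt_const.mul hbase).mul hq).mul
    (continuousWithinAt_const.add (hratio.mul hF))).add continuousWithinAt_const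

theorem lfrraUtility_zero (α σ K C q : ℝ) (hα : α ≠ 0) (hσ0 : σ ≠ 0)
    (habs : |α * σ * q| < 1) :
    lfrraUtility α σ K C q 0 =
      K / (α * (σ - 1)) * ((1 + α * σ * q) ^ ((σ - 1) / σ) - 1) + C := by
  set x := α * σ * q with hx
  have h1x : 0 < 1 + x := by linarith [neg_abs_le x]
  set A := (1 + x) ^ (1 / σ)
  have hA : A ≠ 0 := (Real.rpow_pos_of_pos h1x (1 / σ)).ne'
  set F := ₂F₁ (1 - 1 / σ) 1 2 (-x)
  have hF : α * q * F = A - 1 := by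
    have hσx : 1 / σ * x = α * q := by rw [hx]; field_simp
    rw [← hσx]
    exact mul_ordinaryHypergeometric_one_sub_one_two (1 / σ) habs
  rw [lfrraUtility, sub_zero, zero_sub, Real.rpow_neg h1x.le, sub_zero, Real.rpow_one, div_one,
    show (σ - 1) / σ = 1 - 1 / σ by field_simp, Real.rpow_sub h1x, Real.rpow_one]
  calc K * σ / (σ - 1) * A⁻¹ * q * (1 + -(1 / σ) * F) + C
      = (σ - 1)⁻¹ * (K * q * (σ - F) / A) + C := by field_simp; ring
    _ = (σ - 1)⁻¹ * (K / α * ((1 + x) / A - 1)) + C := by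
      congr 2
      field_simp
      linear_combination (-K) * hF - K * hx
    _ = K / (α * (σ - 1)) * ((1 + x) / A - 1) + C := by
      rw [div_mul_eq_div_div_swap]
      ring

theorem lfrra_utility_tendsto_HARA_general
    (α σ K C q : ℝ) (hα : α ≠ 0) (hσ0 : σ ≠ 0)
    (habs : |α * σ * q| < 1) :
    Filter.Tendsto (fun β : ℝ =>
        (K * σ / (σ - 1)) * (1 + α * σ * q) ^ (β - 1/σ) * q ^ (1 - β) *
          (1 + ((β - 1/σ) / (1 - β)) *
            ∑' (n : ℕ), ((ascPochhammer ℝ n).eval (1 - 1/σ) * (ascPochhammer ℝ n).eval 1 /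
              (ascPochhammer ℝ n).eval (2 - β)) * (-(α * σ * q)) ^ n / (Nat.factorial n : ℝ)) + C)
      (nhdsWithin 0 (Set.Ioo (0:ℝ) 1))
      (nhds ((K / (α * (σ - 1))) * ((1 + α * σ * q) ^ ((σ - 1)/σ) - 1) + C)) := by
  rw [← lfrraUtility_zero α σ K C q hα hσ0 habs]
  refine (continuousWithinAt_lfrraUtility_zero α σ K C q habs).tendsto.congr fun β => ?_
  rw [lfrraUtility, ordinaryHypergeometric_eq_tsum_div]

/-- As `β → 0⁺` (within `(0,1)`), the LFRRA utility converges to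
the HARA utility `(K/(α(σ−1)))·[(1+ασq)^((σ−1)/σ) − 1] + C`. -/
theorem lfrra_utility_tendsto_HARA
    (α σ K C q : ℝ) (hα : α ≠ 0) (hσ0 : σ ≠ 0) (hσ1 : σ ≠ 1)
    (hq : 0 < q) (habs : |α * σ * q| < 1) :
    Filter.Tendsto (fun β : ℝ =>
        (K * σ / (σ - 1)) * (1 + α * σ * q) ^ (β - 1/σ) * q ^ (1 - β) *
          (1 + ((β - 1/σ) / (1 - β)) *
            ∑' (n : ℕ), ((ascPochhammer ℝ n).eval (1 - 1/σ) * (ascPochhammer ℝ n).eval 1 /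
              (ascPochhammer ℝ n).eval (2 - β)) * (-(α * σ * q)) ^ n / (Nat.factorial n : ℝ)) + C)
      (nhdsWithin 0 (Set.Ioo (0:ℝ) 1))
      (nhds ((K / (α * (σ - 1))) * ((1 + α * σ * q) ^ ((σ - 1)/σ) - 1) + C)) :=
  lfrra_utility_tendsto_HARA_general α σ K C q hα hσ0 habs
end

section
/- Let α > 0, let σ > 0 with σ ≠ 1, let K > 0 and C ∈ ℝ, and let q > 0. Then the function u defined by u(q) = (Kσ/(σ−1))·((1+ασq)^{1−1/σ}/q)·[q − ((σ−1)/(ασ²))·∫₀¹ (1−t)^{1/σ−1}·(1+t/(ασq))^{−1} dt] + C is differentiable at q with derivative u′(q) = K·(1+ασq)^{1−1/σ}/q. (This is the integral, analytically continued, representation of the CREMR utility for σ > 0, valid for all q > 0.) -/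
/-!
With `r = 1/σ - 1` and `c = 1 + ασx`, the substitution `v = (1 - t)/c` turns the integral into
`ασx · c^r · ∫₀^{1/c} v^r/(1 - v) dv`, and since `c^{1-1/σ} c^r = 1` the utility becomes
`Kσ/(σ-1) · c^{1-1/σ} - K ∫₀^{1/c} v^r/(1 - v) dv + C`. This closed form is differentiated
by the fundamental theorem of calculus at the upper limit `1/c ∈ (0, 1)`, where the integrand
is continuous; `r > -1` makes the integral converge at `0`.
-/

open MeasureTheory intervalIntegral Real Filter Set Topology

lemma integral_one_sub_rpow_mul_inv_one_add_div (r : ℝ) {b : ℝ} (hb : 0 < b) :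
    ∫ t in (0:ℝ)..1, (1 - t) ^ r * (1 + t / b)⁻¹
      = b * (1 + b) ^ r * ∫ v in (0:ℝ)..(1 + b)⁻¹, v ^ r * (1 - v)⁻¹ := by
  set c := 1 + b
  have hc : 0 < c := by positivity
  set f : ℝ → ℝ := fun s => s ^ r * (b * (c - s)⁻¹)
  have reflect :
      ∫ t in (0:ℝ)..1, (1 - t) ^ r * (1 + t / b)⁻¹ = ∫ s in (0:ℝ)..1, f s := by
    have : ∀ t, (1 + t / b)⁻¹ = b * (c - (1 - t))⁻¹ := fun t => by
      rw [show c - (1 - t) = (1 + t / b) * b by field_simp; ring, mul_inv, ← mul_assoc,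
        mul_comm b, mul_assoc, mul_inv_cancel₀ hb.ne', mul_one]
    simp only [this]
    exact (integral_comp_sub_left f 1).trans (by rw [sub_self, sub_zero])
  have rescale : ∫ s in (0:ℝ)..1, f s = c • ∫ v in (0:ℝ)..c⁻¹, f (c * v) := by
    rw [smul_integral_comp_mul_left f c, mul_zero, mul_inv_cancel₀ hc.ne']
  have on_range :
      ∀ v ∈ uIcc (0:ℝ) c⁻¹, f (c * v) = c ^ r * b * c⁻¹ * (v ^ r * (1 - v)⁻¹) := by
    intro v hv
    rw [uIcc_of_le (by positivity)] at hv
    simp only [f, mul_rpow hc.le hv.1, show c - c * v = c * (1 - v) by ring, mul_inv]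
    ring
  rw [reflect, rescale, integral_congr on_range, intervalIntegral.integral_const_mul, smul_eq_mul]
  field_simp

lemma hasDerivAt_integral_rpow_mul_inv_one_sub {r y : ℝ} (hr : -1 < r) (hy₀ : 0 < y)
    (hy₁ : y < 1) :
    HasDerivAt (fun z => ∫ v in (0:ℝ)..z, v ^ r * (1 - v)⁻¹) (y ^ r * (1 - y)⁻¹) y := by
  have hcont : ContinuousOn (fun v : ℝ => v ^ r * (1 - v)⁻¹) (Ioo 0 1) :=
    (continuousOn_id.rpow_const fun v hv => Or.inl hv.1.ne').mul
      ((continuousOn_const.sub continuousOn_id).inv₀ fun v hv => (sub_pos.2 hv.2).ne')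
  have hint : IntervalIntegrable (fun v : ℝ => v ^ r * (1 - v)⁻¹) volume 0 y := by
    refine (intervalIntegrable_rpow' hr).mul_continuousOn
      ((continuousOn_const.sub continuousOn_id).inv₀ fun v hv => ?_)
    rw [uIcc_of_le hy₀.le] at hv
    exact (sub_pos.2 (hv.2.trans_lt hy₁)).ne'
  have hy : y ∈ Ioo (0:ℝ) 1 := ⟨hy₀, hy₁⟩
  exact integral_hasDerivAt_right hint (hcont.stronglyMeasurableAtFilter isOpen_Ioo y hy)
    (hcont.continuousAt (isOpen_Ioo.mem_nhds hy))

lemma hasDerivAt_integral_rpow_mul_inv_one_sub_comp_inv {r a x : ℝ} (hr : -1 < r)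
    (hax : 0 < a * x) :
    HasDerivAt (fun x => ∫ v in (0:ℝ)..(1 + a * x)⁻¹, v ^ r * (1 - v)⁻¹)
      (-(1 + a * x) ^ (-r - 1) / x) x := by
  have hc : 0 < 1 + a * x := by linarith
  have hlin : HasDerivAt (fun x => 1 + a * x) a x := by
    simpa using ((hasDerivAt_id x).const_mul a).const_add 1
  have hw₁ : (1 + a * x)⁻¹ < 1 := inv_lt_one_of_one_lt₀ (by linarith)
  refine ((hasDerivAt_integral_rpow_mul_inv_one_sub hr (inv_pos.2 hc) hw₁).comp x
    (hlin.inv hc.ne')).congr_deriv ?_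
  have ha : a ≠ 0 := by rintro rfl; simp at hax
  have hx : x ≠ 0 := by rintro rfl; simp at hax
  have one_sub : 1 - (1 + a * x)⁻¹ = a * x / (1 + a * x) := by field_simp; ring
  rw [one_sub, inv_rpow hc.le, ← rpow_neg hc.le,
    show -r - 1 = -r + (-1 : ℤ) by push_cast; ring, rpow_add_intCast hc.ne']
  field_simp

lemma cremr_integral_form_eq {α σ x : ℝ} (K : ℝ) (hα : 0 < α) (hσ : 0 < σ)
    (hσ1 : σ ≠ 1) (hx : 0 < x) :
    (K * σ / (σ - 1)) * ((1 + α * σ * x) ^ (1 - 1/σ) / x) *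
        (x - ((σ - 1) / (α * σ ^ 2)) *
          ∫ t in (0:ℝ)..1, (1 - t) ^ (1/σ - 1) * (1 + t / (α * σ * x))⁻¹)
      = K * σ / (σ - 1) * (1 + α * σ * x) ^ (1 - 1/σ)
          - K * ∫ v in (0:ℝ)..(1 + α * σ * x)⁻¹, v ^ (1/σ - 1) * (1 - v)⁻¹ := by
  have hc : 0 < 1 + α * σ * x := by positivity
  have cancel : (1 + α * σ * x) ^ (1/σ - 1) = ((1 + α * σ * x) ^ (1 - 1/σ))⁻¹ := by
    rw [← rpow_neg hc.le, neg_sub]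
  rw [integral_one_sub_rpow_mul_inv_one_add_div _ (by positivity), cancel]
  generalize ∫ v in (0:ℝ)..(1 + α * σ * x)⁻¹, v ^ (1/σ - 1) * (1 - v)⁻¹ = I
  have hA := (rpow_pos_of_pos hc (1 - 1/σ)).ne'
  generalize (1 + α * σ * x) ^ (1 - 1/σ) = A at hA ⊢
  have := sub_ne_zero.2 hσ1
  field_simp

lemma hasDerivAt_cremr_closed_form {σ a x : ℝ} (K : ℝ) (hσ : 0 < σ) (hσ1 : σ ≠ 1)
    (hax : 0 < a * x) :
    HasDerivAt (fun x => K * σ / (σ - 1) * (1 + a * x) ^ (1 - 1/σ)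
        - K * ∫ v in (0:ℝ)..(1 + a * x)⁻¹, v ^ (1/σ - 1) * (1 - v)⁻¹)
      (K * (1 + a * x) ^ (1 - 1/σ) / x) x := by
  have hc : 0 < 1 + a * x := by linarith
  have hlin : HasDerivAt (fun x => 1 + a * x) a x := by
    simpa using ((hasDerivAt_id x).const_mul a).const_add 1
  have hpow := (hlin.rpow_const (p := 1 - 1/σ) (Or.inl hc.ne')).const_mul (K * σ / (σ - 1))
  have hint := (hasDerivAt_integral_rpow_mul_inv_one_sub_comp_inv (r := 1/σ - 1)
    (by linarith [one_div_pos.2 hσ]) hax).const_mul K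
  refine (hpow.sub hint).congr_deriv ?_
  have hx : x ≠ 0 := by rintro rfl; simp at hax
  have := sub_ne_zero.2 hσ1
  rw [show 1 - 1/σ - 1 = -(1/σ) by ring, show -(1/σ - 1) - 1 = -(1/σ) by ring,
    show 1 - 1/σ = -(1/σ) + (1 : ℤ) by push_cast; ring, rpow_add_intCast hc.ne']
  generalize (1 + a * x) ^ (-(1/σ)) = P
  field_simp
  ring

theorem cremr_utility_integral_hasDerivAt_general
    (α σ K C q : ℝ) (hα : 0 < α) (hσ : 0 < σ) (hσ1 : σ ≠ 1)
    (hq : 0 < q) :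
    HasDerivAt (fun x : ℝ =>
        (K * σ / (σ - 1)) * ((1 + α * σ * x) ^ (1 - 1/σ) / x) *
          (x - ((σ - 1) / (α * σ ^ 2)) *
            ∫ t in (0:ℝ)..1, (1 - t) ^ (1/σ - 1) * (1 + t / (α * σ * x))⁻¹) + C)
      (K * (1 + α * σ * q) ^ (1 - 1/σ) / q) q := by
  refine ((hasDerivAt_cremr_closed_form K hσ hσ1 (by positivity)).add_const C)
    |>.congr_of_eventuallyEq ?_
  filter_upwards [eventually_gt_nhds hq] with x hx
  rw [cremr_integral_form_eq K hα hσ hσ1 hx]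

/-- The integral (analytically continued) representation of the
CREMR utility for `σ > 0` has marginal utility `K·(1+ασq)^(1−1/σ)/q` at every
`q > 0`. -/
theorem cremr_utility_integral_hasDerivAt
    (α σ K C q : ℝ) (hα : 0 < α) (hσ : 0 < σ) (hσ1 : σ ≠ 1)
    (hK : 0 < K) (hq : 0 < q) :
    HasDerivAt (fun x : ℝ =>
        (K * σ / (σ - 1)) * ((1 + α * σ * x) ^ (1 - 1/σ) / x) *
          (x - ((σ - 1) / (α * σ ^ 2)) *
            ∫ t in (0:ℝ)..1, (1 - t) ^ (1/σ - 1) * (1 + t / (α * σ * x))⁻¹) + C)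
      (K * (1 + α * σ * q) ^ (1 - 1/σ) / q) q :=
  cremr_utility_integral_hasDerivAt_general α σ K C q hα hσ hσ1 hq
end

section
/- Let α < 0 and β ∈ (0,1), and let I = (0, −β/α). Suppose u : ℝ → ℝ is differentiable on I with derivative u′, u′ is differentiable on I with derivative u″, u′(q) > 0 for all q ∈ I, and (αq+1)·q·u″(q) + (αq+β)·u′(q) = 0 for all q ∈ I (i.e., u has LFRRA with σ = 1: −q·u″(q)/u′(q) = (αq+β)/(αq+1)). Then there exist K > 0 and C ∈ ℝ such that u(q) = C + K·∫₀^q s^{−β}·(1+αs)^{β−1} ds for all q ∈ I. (Up to the substitution t = −αs, the integral is the incomplete beta function B(−αq, 1−β, β)/(−α)^{1−β}.) -/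
/-!
The ODE is first order in `u'`: with the integrating factor `P(q) = q^β (1 + αq)^(1-β)`, which
satisfies `(1 + αq) q P' = (αq + β) P`, it says exactly that `(u' P)' = 0`. Hence `u' = K / P`
for a constant `K > 0`, and `1 / P` is the integrand, which is integrable at `0` because `β < 1`.
-/

open Set

noncomputable def lfrraIntegratingFactor (α β q : ℝ) : ℝ := q ^ β * (1 + α * q) ^ (1 - β)

section

variable {α β q : ℝ}

lemma mul_add_pos_of_lt_neg_div (hα : α < 0) (hq : q < -β / α) : 0 < α * q + β := by
  rw [lt_div_iff_of_neg hα] at hq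
  linarith

lemma lfrraIntegratingFactor_pos (hq : 0 < q) (h1 : 0 < 1 + α * q) :
    0 < lfrraIntegratingFactor α β q :=
  mul_pos (Real.rpow_pos_of_pos hq _) (Real.rpow_pos_of_pos h1 _)

lemma inv_lfrraIntegratingFactor (hq : 0 < q) (h1 : 0 < 1 + α * q) :
    (lfrraIntegratingFactor α β q)⁻¹ = q ^ (-β) * (1 + α * q) ^ (β - 1) := by
  rw [lfrraIntegratingFactor, mul_inv, ← Real.rpow_neg hq.le, ← Real.rpow_neg h1.le, neg_sub]

lemma hasDerivAt_lfrraIntegratingFactor (hq : 0 < q) (h1 : 0 < 1 + α * q) :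
    HasDerivAt (lfrraIntegratingFactor α β)
      (lfrraIntegratingFactor α β q * (α * q + β) / (q * (1 + α * q))) q := by
  have hlin : HasDerivAt (fun s : ℝ => 1 + α * s) α q := by
    simpa using ((hasDerivAt_id q).const_mul α).const_add 1
  refine ((Real.hasDerivAt_rpow_const (p := β) (Or.inl hq.ne')).mul
    (hlin.rpow_const (p := 1 - β) (Or.inl h1.ne'))).congr_deriv ?_
  rw [Real.rpow_sub_one hq.ne', Real.rpow_sub_one h1.ne', lfrraIntegratingFactor,
    eq_div_iff (mul_pos hq h1).ne']
  linear_combination (β * q ^ β * (1 + α * q) ^ (1 - β) * (1 + α * q)) * mul_inv_cancel₀ hq.ne' +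
    (q ^ β * α * (1 - β) * (1 + α * q) ^ (1 - β) * q) * mul_inv_cancel₀ h1.ne'

lemma hasDerivAt_mul_lfrraIntegratingFactor_of_ode {v : ℝ → ℝ} {v' : ℝ}
    (hq : 0 < q) (h1 : 0 < 1 + α * q) (hv : HasDerivAt v v' q)
    (hode : (α * q + 1) * q * v' + (α * q + β) * v q = 0) :
    HasDerivAt (fun s => v s * lfrraIntegratingFactor α β s) 0 q := by
  refine (hv.mul (hasDerivAt_lfrraIntegratingFactor hq h1)).congr_deriv ?_
  calc _ = lfrraIntegratingFactor α β q / (q * (1 + α * q)) *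
        ((α * q + 1) * q * v' + (α * q + β) * v q) := by field_simp; ring
    _ = 0 := by rw [hode, mul_zero]

lemma intervalIntegrable_rpow_mul_one_add_mul_rpow (hβ : β < 1) (hq : 0 ≤ q)
    (h1 : 0 < 1 + α * q) :
    IntervalIntegrable (fun s => s ^ (-β) * (1 + α * s) ^ (β - 1)) MeasureTheory.volume 0 q := by
  refine (intervalIntegral.intervalIntegrable_rpow' (by linarith)).mul_continuousOn ?_
  refine ContinuousOn.rpow_const (by fun_prop) fun s hs => Or.inl ?_
  rw [uIcc_of_le hq] at hs
  rcases le_or_gt 0 α with hα | hα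
  · nlinarith [mul_nonneg hα hs.1]
  · nlinarith [mul_le_mul_of_nonpos_left hs.2 hα.le]

lemma hasDerivAt_integral_rpow_mul_one_add_mul_rpow (hβ : β < 1) (hq : 0 < q)
    (h1 : 0 < 1 + α * q) :
    HasDerivAt (fun x => ∫ s in (0 : ℝ)..x, s ^ (-β) * (1 + α * s) ^ (β - 1))
      (q ^ (-β) * (1 + α * q) ^ (β - 1)) q := by
  have hcont : ContinuousAt (fun s : ℝ => s ^ (-β) * (1 + α * s) ^ (β - 1)) q :=
    (Real.continuousAt_rpow_const q (-β) (Or.inl hq.ne')).mul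
      ((by fun_prop : ContinuousAt (fun s : ℝ => 1 + α * s) q).rpow_const (Or.inl h1.ne'))
  exact intervalIntegral.integral_hasDerivAt_right
    (intervalIntegrable_rpow_mul_one_add_mul_rpow hβ hq.le h1)
    (by fun_prop : Measurable _).stronglyMeasurable.stronglyMeasurableAtFilter hcont

end

lemma exists_eqOn_const_of_hasDerivAt_zero {s : Set ℝ} (hs : IsOpen s) (hs' : IsPreconnected s)
    {f : ℝ → ℝ} (hf : ∀ x ∈ s, HasDerivAt f 0 x) : ∃ a, ∀ x ∈ s, f x = a :=
  hs.exists_is_const_of_deriv_eq_zero hs'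
    (fun x hx => (hf x hx).differentiableAt.differentiableWithinAt) fun x hx => (hf x hx).deriv

/-- LFRRA with `σ = 1` (and `α < 0`, `β ∈ (0,1)`) implies the
(incomplete beta) utility `u(q) = C + K·∫₀^q s^(−β)·(1+αs)^(β−1) ds` on the
interval `(0, −β/α)`. -/
theorem lfrra_sigma_one_incomplete_beta
    (α β : ℝ) (hα : α < 0) (hβ : β ∈ Set.Ioo (0:ℝ) 1)
    (u u' u'' : ℝ → ℝ)
    (hu : ∀ q ∈ Set.Ioo (0:ℝ) (-β/α), HasDerivAt u (u' q) q)
    (hu' : ∀ q ∈ Set.Ioo (0:ℝ) (-β/α), HasDerivAt u' (u'' q) q)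
    (hpos : ∀ q ∈ Set.Ioo (0:ℝ) (-β/α), 0 < u' q)
    (hode : ∀ q ∈ Set.Ioo (0:ℝ) (-β/α),
      (α * q + 1) * q * u'' q + (α * q + β) * u' q = 0) :
    ∃ K : ℝ, 0 < K ∧ ∃ C : ℝ, ∀ q ∈ Set.Ioo (0:ℝ) (-β/α),
      u q = C + K * ∫ s in (0:ℝ)..q, s ^ (-β) * (1 + α * s) ^ (β - 1) := by
  obtain ⟨hβ0, hβ1⟩ := hβ
  have h1 : ∀ q ∈ Ioo (0:ℝ) (-β/α), 0 < 1 + α * q := fun q hq => by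
    linarith [mul_add_pos_of_lt_neg_div hα hq.2]
  obtain ⟨K, hK⟩ := exists_eqOn_const_of_hasDerivAt_zero isOpen_Ioo isPreconnected_Ioo
    fun q hq => hasDerivAt_mul_lfrraIntegratingFactor_of_ode hq.1 (h1 q hq) (hu' q hq) (hode q hq)
  have hq₀ : -β / α / 2 ∈ Ioo (0:ℝ) (-β/α) := by
    have : 0 < -β / α := div_pos_of_neg_of_neg (by linarith) hα
    constructor <;> linarith
  have hKpos : 0 < K :=
    hK _ hq₀ ▸ mul_pos (hpos _ hq₀) (lfrraIntegratingFactor_pos hq₀.1 (h1 _ hq₀))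
  have hu'_eq : ∀ q ∈ Ioo (0:ℝ) (-β/α), u' q = K * (q ^ (-β) * (1 + α * q) ^ (β - 1)) :=
    fun q hq => by
      rw [← inv_lfrraIntegratingFactor hq.1 (h1 q hq), ← hK q hq,
        mul_inv_cancel_right₀ (lfrraIntegratingFactor_pos hq.1 (h1 q hq)).ne']
  obtain ⟨C, hC⟩ := exists_eqOn_const_of_hasDerivAt_zero isOpen_Ioo isPreconnected_Ioo
    fun q hq => by
      have := (hu q hq).sub
        ((hasDerivAt_integral_rpow_mul_one_add_mul_rpow hβ1 hq.1 (h1 q hq)).const_mul K)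
      rwa [hu'_eq q hq, sub_self] at this
  exact ⟨K, hKpos, C, fun q hq => eq_add_of_sub_eq (hC q hq)⟩
end

section
/- Let α > 0, β ∈ (0,1), σ > 1 with βσ < 1. Then for every x > 0 there exists a unique μ ∈ ((σ−1)/σ, 1−β) such that μ·[(1−βσ)/(1−σ(1−μ))]^{β−1/σ}·[(1/α)·(1−β−μ)/(1−σ(1−μ))]^{−β} = x. (Existence and uniqueness of the markup function in Case 1a with σ > 1.) -/
open Real Filter Set Topology

/-! On `((σ - 1)/σ, 1 - β)` the left-hand side is the positive constant `(1 - βσ)^{β - 1/σ} α^β`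
times `g μ = μ (1 - σ(1 - μ))^{1/σ} (1 - β - μ)^{-β}`, a product of positive increasing factors.
So `g` is strictly increasing and continuous; it vanishes at `(σ - 1)/σ` and blows up at `1 - β`,
hence takes every positive value exactly once by the intermediate value theorem. -/

theorem StrictMonoOn.existsUnique_eq_of_tendsto {α δ : Type*}
    [ConditionallyCompleteLinearOrder α] [TopologicalSpace α] [OrderTopology α]
    [DenselyOrdered α] [LinearOrder δ] [TopologicalSpace δ] [OrderClosedTopology δ]
    [NoMaxOrder δ]
    {f : α → δ} {a b : α} {l y : δ} (hab : a < b) (hf : StrictMonoOn f (Ioo a b))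
    (hcont : ContinuousOn f (Ioo a b)) (ha : Tendsto f (𝓝[>] a) (𝓝 l))
    (hb : Tendsto f (𝓝[<] b) atTop) (hy : l < y) :
    ∃! x, x ∈ Ioo a b ∧ f x = y := by
  have := nhdsGT_neBot_of_exists_gt ⟨b, hab⟩
  have := nhdsLT_neBot_of_exists_lt ⟨a, hab⟩
  obtain ⟨c, hfc, hc⟩ := ((ha.eventually_lt_const hy).and (Ioo_mem_nhdsGT hab)).exists
  obtain ⟨d, hfd, hd⟩ := ((hb.eventually_gt_atTop y).and (Ioo_mem_nhdsLT hab)).exists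
  obtain ⟨x, hx, hfx⟩ := hcont.surjOn_Icc hc hd ⟨hfc.le, hfd.le⟩
  exact ⟨x, ⟨hx, hfx⟩, fun z ⟨hz, hfz⟩ => hf.injOn hz hx (hfz.trans hfx.symm)⟩

noncomputable def reducedFOC (β σ μ : ℝ) : ℝ :=
  μ * (1 - σ * (1 - μ)) ^ (1 / σ) * (1 - β - μ) ^ (-β)

section
variable {β σ μ : ℝ}

lemma one_sub_mul_one_sub_pos (hσ : 0 < σ) (hμ : (σ - 1) / σ < μ) : 0 < 1 - σ * (1 - μ) := by
  rw [div_lt_iff₀ hσ] at hμ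
  linarith

lemma foc_eq_mul_reducedFOC {α : ℝ} (hα : 0 < α) (hβσ : β * σ < 1)
    (ht : 0 < 1 - σ * (1 - μ)) (hs : 0 < 1 - β - μ) :
    μ * ((1 - β * σ) / (1 - σ * (1 - μ))) ^ (β - 1/σ) *
      ((1/α) * (1 - β - μ) / (1 - σ * (1 - μ))) ^ (-β)
    = (1 - β * σ) ^ (β - 1/σ) * α ^ β * reducedFOC β σ μ := by
  set t := 1 - σ * (1 - μ)
  set s := 1 - β - μ
  have htβ : t ^ β = t ^ (β - 1/σ) * t ^ (1/σ) := by rw [← rpow_add ht]; ring_nf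
  rw [reducedFOC, show (1/α) * s / t = s / (α * t) by field_simp, rpow_neg (by positivity),
    rpow_neg hs.le, div_rpow hs.le (by positivity), mul_rpow hα.le ht.le,
    div_rpow (by linarith) ht.le]
  have := rpow_pos_of_pos ht (β - 1/σ)
  have := rpow_pos_of_pos hs β
  have := rpow_pos_of_pos hα β
  field_simp
  rw [htβ]
  ring

lemma reducedFOC_strictMonoOn (hβ : 0 < β) (hσ : 1 ≤ σ) :
    StrictMonoOn (reducedFOC β σ) (Ioo ((σ - 1) / σ) (1 - β)) := by
  intro μ₁ h₁ μ₂ h₂ hlt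
  have ht₁ := one_sub_mul_one_sub_pos (by linarith) h₁.1
  have hs₂ : 0 < 1 - β - μ₂ := by linarith [h₂.2]
  have hμ₁ : 0 < μ₁ := lt_of_le_of_lt (div_nonneg (by linarith) (by linarith)) h₁.1
  have hpow : (1 - σ * (1 - μ₁)) ^ (1/σ) < (1 - σ * (1 - μ₂)) ^ (1/σ) :=
    rpow_lt_rpow ht₁.le (by nlinarith) (by positivity)
  have hneg : (1 - β - μ₁) ^ (-β) < (1 - β - μ₂) ^ (-β) :=
    rpow_lt_rpow_of_neg hs₂ (by linarith) (by linarith)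
  have hs₁ : 0 < 1 - β - μ₁ := by linarith
  have hpos₁ : 0 ≤ μ₁ * (1 - σ * (1 - μ₁)) ^ (1/σ) := by positivity
  exact mul_lt_mul'' (mul_lt_mul'' hlt hpow hμ₁.le (rpow_nonneg ht₁.le _)) hneg hpos₁
    (rpow_pos_of_pos hs₁ _).le

lemma continuousAt_reducedFOC (hσ : 0 < σ) (hμ : μ ≠ 1 - β) :
    ContinuousAt (reducedFOC β σ) μ := by
  have hs : 1 - β - μ ≠ 0 := fun h => hμ (by linarith)
  unfold reducedFOC
  fun_prop (disch := first | positivity | exact Or.inl hs | exact Or.inr (by positivity))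

lemma tendsto_reducedFOC_zero (hσ : 0 < σ) (hab : (σ - 1) / σ < 1 - β) :
    Tendsto (reducedFOC β σ) (𝓝[>] ((σ - 1) / σ)) (𝓝 0) := by
  have hzero : reducedFOC β σ ((σ - 1) / σ) = 0 := by
    rw [reducedFOC, show 1 - σ * (1 - (σ - 1) / σ) = 0 by field_simp; ring,
      zero_rpow (by positivity)]
    ring
  rw [← hzero]
  exact (continuousAt_reducedFOC hσ hab.ne).tendsto.mono_left nhdsWithin_le_nhds

lemma tendsto_reducedFOC_atTop (hβ : 0 < β) (hβ1 : β < 1) (hσ : 0 < σ) (hβσ : β * σ < 1) :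
    Tendsto (reducedFOC β σ) (𝓝[<] (1 - β)) atTop := by
  have hgap : Tendsto (fun μ => 1 - β - μ) (𝓝[<] (1 - β)) (𝓝[>] 0) := by
    refine tendsto_nhdsWithin_of_tendsto_nhds_of_eventually_within _ ?_ ?_
    · have : Tendsto (fun μ => 1 - β - μ) (𝓝 (1 - β)) (𝓝 (1 - β - (1 - β))) :=
        (continuous_const.sub continuous_id).tendsto _
      rw [sub_self] at this
      exact this.mono_left nhdsWithin_le_nhds
    · filter_upwards [self_mem_nhdsWithin] with μ hμ
      exact sub_pos.2 (mem_Iio.1 hμ)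
  have hfront : Tendsto (fun μ => μ * (1 - σ * (1 - μ)) ^ (1 / σ)) (𝓝[<] (1 - β))
      (𝓝 ((1 - β) * (1 - σ * (1 - (1 - β))) ^ (1 / σ))) := by
    refine ContinuousAt.tendsto ?_ |>.mono_left nhdsWithin_le_nhds
    fun_prop (disch := positivity)
  exact hfront.pos_mul_atTop (mul_pos (by linarith) (rpow_pos_of_pos (by nlinarith) _))
    ((tendsto_rpow_neg_nhdsGT_zero (neg_lt_zero.2 hβ)).comp hgap)
end

/-- Existence and uniqueness of the inverse markup in Case 1a
with `σ > 1`: for every `x > 0` there is a unique `μ ∈ ((σ−1)/σ, 1−β)`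
solving the first-order condition. -/
theorem markup_exists_unique_case1a
    (α β σ : ℝ) (hα : 0 < α) (hβ : β ∈ Set.Ioo (0:ℝ) 1) (hσ : 1 < σ)
    (hβσ : β * σ < 1) :
    ∀ x : ℝ, 0 < x →
      ∃! μ : ℝ, μ ∈ Set.Ioo ((σ - 1) / σ) (1 - β) ∧
        μ * ((1 - β * σ) / (1 - σ * (1 - μ))) ^ (β - 1/σ) *
          ((1/α) * (1 - β - μ) / (1 - σ * (1 - μ))) ^ (-β) = x := by
  obtain ⟨hβ0, hβ1⟩ := hβ
  intro x hx
  have hσ0 : 0 < σ := by linarith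
  have hab : (σ - 1) / σ < 1 - β := by rw [div_lt_iff₀ hσ0]; nlinarith
  set C := (1 - β * σ) ^ (β - 1/σ) * α ^ β
  have hC : 0 < C := mul_pos (rpow_pos_of_pos (by linarith) _) (rpow_pos_of_pos hα _)
  have hfoc := fun μ (hμ : μ ∈ Ioo ((σ - 1) / σ) (1 - β)) ↦
    foc_eq_mul_reducedFOC hα hβσ (one_sub_mul_one_sub_pos hσ0 hμ.1) (by linarith [hμ.2])
  obtain ⟨μ, ⟨hμ, hgμ⟩, huniq⟩ :=
    (reducedFOC_strictMonoOn hβ0 hσ.le).existsUnique_eq_of_tendsto hab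
      (fun μ hμ ↦ (continuousAt_reducedFOC hσ0 hμ.2.ne).continuousWithinAt)
      (tendsto_reducedFOC_zero hσ0 hab) (tendsto_reducedFOC_atTop hβ0 hβ1 hσ0 hβσ)
      (div_pos hx hC)
  refine ⟨μ, ⟨hμ, ?_⟩, fun ν ⟨hν, hfν⟩ ↦ huniq ν ⟨hν, ?_⟩⟩
  · rw [hfoc μ hμ, hgμ, mul_div_cancel₀ _ hC.ne']
  · rw [← hfν, hfoc ν hν, mul_div_cancel_left₀ _ hC.ne']
end

section
/- Let σ ∈ ℝ with σ ≠ 0, and let x satisfy 0 < x ≤ 1. Then there exists a unique μ with 0 < μ ≤ 1 and σ(1−μ) < 1 such that 1 − μ = (1 − (μ/x)^{−σ})/σ. (Existence and uniqueness of the markup function in the HARA case β = 0.) -/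
/-- Existence and uniqueness of the inverse markup in the HARA
case `β = 0`: for `0 < x ≤ 1` there is a unique `μ` with `0 < μ ≤ 1` and
`σ(1−μ) < 1` solving `1 − μ = (1 − (μ/x)^(−σ))/σ`. -/
theorem markup_exists_unique_hara
    (σ x : ℝ) (hσ : σ ≠ 0) (hx : 0 < x) (hx1 : x ≤ 1) :
    ∃! μ : ℝ, (0 < μ ∧ μ ≤ 1 ∧ σ * (1 - μ) < 1) ∧
      1 - μ = (1 - (μ / x) ^ (-σ)) / σ := by
  -- reformulate the equation
  have key : ∀ μ : ℝ, (1 - μ = (1 - (μ / x) ^ (-σ)) / σ) ↔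
      (μ / x) ^ (-σ) = 1 - σ + σ * μ := by
    intro μ
    rw [eq_div_iff hσ]
    constructor <;> intro h <;> nlinarith [h]
  -- the constraint follows from the equation for positive μ
  have hcons : ∀ μ : ℝ, 0 < μ → (μ / x) ^ (-σ) = 1 - σ + σ * μ →
      σ * (1 - μ) < 1 := by
    intro μ hμ heq
    have hpos : 0 < (μ / x) ^ (-σ) := Real.rpow_pos_of_pos (div_pos hμ hx) _
    nlinarith
  -- existence
  have hex : ∃ μ : ℝ, 0 < μ ∧ μ ≤ 1 ∧ (μ / x) ^ (-σ) = 1 - σ + σ * μ := by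
    rcases eq_or_lt_of_le hx1 with h1 | hxlt
    · refine ⟨1, one_pos, le_refl 1, ?_⟩
      rw [h1] at hx ⊢
      simp
    · set f : ℝ → ℝ := fun μ => (μ / x) ^ (-σ) - (1 - σ + σ * μ) with hf
      have hcont : ContinuousOn f (Set.Icc x 1) := by
        apply ContinuousOn.sub
        · apply ContinuousOn.rpow_const
          · exact (continuousOn_id.div_const x)
          · intro μ hμ
            exact Or.inl (ne_of_gt (div_pos (lt_of_lt_of_le hx hμ.1) hx))
        · fun_prop
      have hfx : f x = σ * (1 - x) := by
        simp only [hf, div_self hx.ne', Real.one_rpow]; ring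
      have hf1 : f 1 = x ^ σ - 1 := by
        simp only [hf]
        rw [one_div, Real.inv_rpow hx.le, ← Real.rpow_neg hx.le, neg_neg]
        ring
      have hroot : ∃ μ ∈ Set.Icc x 1, f μ = 0 := by
        rcases lt_or_gt_of_ne hσ with hσneg | hσpos
        · -- σ < 0 : f x < 0 ≤ f 1
          have h1 : f x ≤ 0 := by rw [hfx]; nlinarith
          have h2 : 0 ≤ f 1 := by
            rw [hf1]
            have : (1:ℝ) < x ^ σ :=
              Real.one_lt_rpow_iff_of_pos hx |>.2 (Or.inr ⟨hxlt, hσneg⟩)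
            linarith
          have := intermediate_value_Icc hx1 hcont
          have h0 : (0:ℝ) ∈ Set.Icc (f x) (f 1) := ⟨h1, h2⟩
          obtain ⟨μ, hμ, hμ0⟩ := this h0
          exact ⟨μ, hμ, hμ0⟩
        · -- σ > 0 : f 1 ≤ 0 ≤ f x
          have h1 : 0 ≤ f x := by rw [hfx]; nlinarith
          have h2 : f 1 ≤ 0 := by
            rw [hf1]
            have : x ^ σ < 1 := Real.rpow_lt_one hx.le hxlt hσpos
            linarith
          have := intermediate_value_Icc' hx1 hcont
          have h0 : (0:ℝ) ∈ Set.Icc (f 1) (f x) := ⟨h2, h1⟩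
          obtain ⟨μ, hμ, hμ0⟩ := this h0
          exact ⟨μ, hμ, hμ0⟩
      obtain ⟨μ, hμmem, hμ0⟩ := hroot
      refine ⟨μ, lt_of_lt_of_le hx hμmem.1, hμmem.2, ?_⟩
      simp only [hf] at hμ0
      linarith
  obtain ⟨μ, hμpos, hμ1, heq⟩ := hex
  refine ⟨μ, ⟨⟨hμpos, hμ1, hcons μ hμpos heq⟩, (key μ).2 heq⟩, ?_⟩
  rintro ν ⟨⟨hνpos, hν1, -⟩, hνeq⟩
  have hνeq' := (key ν).1 hνeq
  by_contra hne
  have hxν : 0 < ν / x := div_pos hνpos hx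
  have hxμ : 0 < μ / x := div_pos hμpos hx
  rcases lt_or_gt_of_ne hne with hlt | hlt
  · rcases lt_or_gt_of_ne hσ with hσneg | hσpos
    · have : (ν / x) ^ (-σ) < (μ / x) ^ (-σ) :=
        Real.rpow_lt_rpow hxν.le (by gcongr) (by linarith)
      rw [hνeq', heq] at this; nlinarith
    · have : (μ / x) ^ (-σ) < (ν / x) ^ (-σ) :=
        Real.rpow_lt_rpow_of_neg hxν (by gcongr) (by linarith)
      rw [hνeq', heq] at this; nlinarith
  · rcases lt_or_gt_of_ne hσ with hσneg | hσpos
    · have : (μ / x) ^ (-σ) < (ν / x) ^ (-σ) :=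
        Real.rpow_lt_rpow hxμ.le (by gcongr) (by linarith)
      rw [hνeq', heq] at this; nlinarith
    · have : (ν / x) ^ (-σ) < (μ / x) ^ (-σ) :=
        Real.rpow_lt_rpow_of_neg hxμ (by gcongr) (by linarith)
      rw [hνeq', heq] at this; nlinarith
end

section
/- Let α > 0, σ > 1, and 0 < x < α(σ−1). Define μ₀ = ((σ−1)/σ)·(1 − (x/(α(σ−1)))^σ). Then μ₀ ∈ (0, (σ−1)/σ), μ₀ satisfies the CREMR first-order condition 1 − σ(1−μ₀) = (μ₀/x)^{−σ}·(1−σ)·(μ₀/(α(σ−1)))^{σ}, and μ₀ is the unique solution of this equation in (0, (σ−1)/σ). Equivalently, the equilibrium markup is 1/μ₀ = (σ/(σ−1))·{1 − [x/(α(σ−1))]^σ}^{−1} > σ/(σ−1) > 1. -/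
lemma cremr_key (σ x A μ : ℝ) (hx : 0 < x) (hA : 0 < A) (hμ : 0 < μ) :
    (μ / x) ^ (-σ) * (1 - σ) * (μ / A) ^ σ = (1 - σ) * (x / A) ^ σ := by
  rw [Real.rpow_neg (div_pos hμ hx).le, Real.div_rpow hμ.le hx.le,
    Real.div_rpow hμ.le hA.le, Real.div_rpow hx.le hA.le]
  have h1 : (μ:ℝ) ^ σ ≠ 0 := (Real.rpow_pos_of_pos hμ σ).ne'
  have h2 : (x:ℝ) ^ σ ≠ 0 := (Real.rpow_pos_of_pos hx σ).ne'
  have h3 : (A:ℝ) ^ σ ≠ 0 := (Real.rpow_pos_of_pos hA σ).ne'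
  field_simp

/-- In the CREMR case `β = 1`, the inverse markup
`μ₀ = ((σ−1)/σ)·(1 − (x/(α(σ−1)))^σ)` lies in `(0,(σ−1)/σ)`, satisfies the
first-order condition, is the unique such solution, and the equilibrium
markup satisfies `1/μ₀ = (σ/(σ−1))·{1 − [x/(α(σ−1))]^σ}⁻¹ > σ/(σ−1) > 1`. -/
theorem markup_cremr_closed_form
    (α σ x : ℝ) (hα : 0 < α) (hσ : 1 < σ) (hx : 0 < x)
    (hxu : x < α * (σ - 1)) :
    ((σ - 1) / σ) * (1 - (x / (α * (σ - 1))) ^ σ) ∈ Set.Ioo (0:ℝ) ((σ - 1) / σ) ∧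
    (1 - σ * (1 - ((σ - 1) / σ) * (1 - (x / (α * (σ - 1))) ^ σ)) =
      ((((σ - 1) / σ) * (1 - (x / (α * (σ - 1))) ^ σ)) / x) ^ (-σ) * (1 - σ) *
        ((((σ - 1) / σ) * (1 - (x / (α * (σ - 1))) ^ σ)) / (α * (σ - 1))) ^ σ) ∧
    (∀ μ ∈ Set.Ioo (0:ℝ) ((σ - 1) / σ),
      1 - σ * (1 - μ) = (μ / x) ^ (-σ) * (1 - σ) * (μ / (α * (σ - 1))) ^ σ →
        μ = ((σ - 1) / σ) * (1 - (x / (α * (σ - 1))) ^ σ)) ∧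
    1 / (((σ - 1) / σ) * (1 - (x / (α * (σ - 1))) ^ σ)) =
      (σ / (σ - 1)) * (1 - (x / (α * (σ - 1))) ^ σ)⁻¹ ∧
    σ / (σ - 1) < 1 / (((σ - 1) / σ) * (1 - (x / (α * (σ - 1))) ^ σ)) ∧
    1 < σ / (σ - 1) := by
  have hσ0 : (0:ℝ) < σ := by linarith
  have hσ1 : (0:ℝ) < σ - 1 := by linarith
  have hA : 0 < α * (σ - 1) := by positivity
  set A := α * (σ - 1) with hAdef
  set t := (x / A) ^ σ with htdef
  have ht0 : 0 < t := Real.rpow_pos_of_pos (div_pos hx hA) σ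
  have ht1 : t < 1 := by
    have : x / A < 1 := (div_lt_one hA).mpr hxu
    simpa using Real.rpow_lt_one (div_pos hx hA).le this hσ0
  have hμ0 : 0 < (σ - 1) / σ * (1 - t) := by
    have : 0 < 1 - t := by linarith
    positivity
  refine ⟨⟨hμ0, ?_⟩, ?_, ?_, ?_, ?_, ?_⟩
  · have h1 : (σ - 1) / σ > 0 := by positivity
    nlinarith [mul_pos h1 ht0]
  · rw [cremr_key σ x A _ hx hA hμ0]
    field_simp
    ring
  · rintro μ ⟨hμp, _⟩ heq
    rw [cremr_key σ x A μ hx hA hμp] at heq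
    field_simp
    linarith
  · have h1 : (1:ℝ) - t ≠ 0 := by linarith
    field_simp
  · rw [div_lt_div_iff₀ hσ1 hμ0]
    have h : σ * ((σ - 1) / σ * (1 - t)) = (σ - 1) * (1 - t) := by field_simp
    nlinarith
  · rw [lt_div_iff₀ hσ1]; linarith
end
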